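/- For α ≥ 1 and fixed conditional PMF P_{Y|X}, the map P_X ↦ J_α(P_X P_{Y|X}) is concave: J_α((λP_{X1} + (1−λ)P_{X2}) P_{Y|X}) ≥ λ J_α(P_{X1} P_{Y|X}) + (1−λ) J_α(P_{X2} P_{Y|X}) for λ ∈ (0,1). -/

import Mathlib

open scoped ENNReal BigOperators
open Finset

/-- Kullback-Leibler divergence between two PMFs on a finite set, valued in `EReal`
(`⊤` when `P` is not absolutely continuous w.r.t. `Q`). -/
noncomputable def klDiv {X : Type*} [Fintype X] (P Q : X → ℝ≥0∞) : EReal :=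
  if ∀ x, Q x = 0 → P x = 0 then
    (((∑ x, (P x).toReal * Real.log ((P x).toReal / (Q x).toReal)) : ℝ) : EReal)
  else ⊤

/-- Rényi divergence of order `α` (KL divergence at `α = 1`).  The ENNReal conventions
`0 * ⊤ = 0` and `0 ^ y = ⊤` for `y < 0` encode `0/0 = 0` and `p/0 = ∞`. -/
noncomputable def renyiDiv {X : Type*} [Fintype X] (α : ℝ) (P Q : X → ℝ≥0∞) : EReal :=
  if α = 1 then klDiv P Q
  else (((α - 1)⁻¹ : ℝ) : EReal) * ENNReal.log (∑ x, P x ^ α * Q x ^ (1 - α))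

/-- Relative α-entropy (Sundaresan's divergence); KL divergence at `α = 1`. -/
noncomputable def relAlphaEnt {X : Type*} [Fintype X] (α : ℝ) (P Q : X → ℝ≥0∞) : EReal :=
  if α = 1 then klDiv P Q
  else ((α / (1 - α) : ℝ) : EReal) * ENNReal.log (∑ x, P x * Q x ^ (α - 1))
    + ENNReal.log (∑ x, Q x ^ α)
    - (((1 - α)⁻¹ : ℝ) : EReal) * ENNReal.log (∑ x, P x ^ α)

/-- The set of PMFs on a finite type, as a subtype. -/
def PMFon (X : Type*) [Fintype X] : Type _ := {p : X → ℝ≥0∞ // ∑ x, p x = 1}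

noncomputable def margX {X Y : Type*} [Fintype X] [Fintype Y] (P : X × Y → ℝ≥0∞) : X → ℝ≥0∞ :=
  fun x => ∑ y, P (x, y)

noncomputable def margY {X Y : Type*} [Fintype X] [Fintype Y] (P : X × Y → ℝ≥0∞) : Y → ℝ≥0∞ :=
  fun y => ∑ x, P (x, y)

/-- Mutual information of a joint PMF. -/
noncomputable def mutualInfo {X Y : Type*} [Fintype X] [Fintype Y] (P : X × Y → ℝ≥0∞) : EReal :=
  klDiv P (fun p => margX P p.1 * margY P p.2)

/-- The dependence measure `J_α`. -/
noncomputable def Jalpha {X Y : Type*} [Fintype X] [Fintype Y] (α : ℝ) (P : X × Y → ℝ≥0∞) :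
    EReal :=
  ⨅ (Q : PMFon X × PMFon Y), renyiDiv α P (fun p => Q.1.1 p.1 * Q.2.1 p.2)

/-- The dependence measure `K_α`. -/
noncomputable def Kalpha {X Y : Type*} [Fintype X] [Fintype Y] (α : ℝ) (P : X × Y → ℝ≥0∞) :
    EReal :=
  ⨅ (Q : PMFon X × PMFon Y), relAlphaEnt α P (fun p => Q.1.1 p.1 * Q.2.1 p.2)

/-- Rényi entropy of order `β`. -/
noncomputable def renyiEnt {X : Type*} [Fintype X] (β : ℝ) (P : X → ℝ≥0∞) : EReal :=
  if β = 1 then (((∑ x, (P x).toReal * Real.log (P x).toReal⁻¹ : ℝ)) : EReal)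
  else (((1 - β)⁻¹ : ℝ) : EReal) * ENNReal.log (∑ x, P x ^ β)

/-- Min-entropy. -/
noncomputable def minEnt {X : Type*} [Fintype X] (P : X → ℝ≥0∞) : EReal :=
  - ENNReal.log (⨆ x, P x)

/-!
For fixed `Q_Y`, the minimum of `D_α(P_X W ‖ Q_X Q_Y)` over `Q_X` is, for `α > 1`,
`(α / (α - 1)) log ∑ₓ P_X(x) c(x)` with `c(x) = (∑_y W(y|x)^α Q_Y(y)^(1-α))^(1/α)`: this is Jensen's
inequality for `t ↦ t^α`, with equality at `Q_X ∝ P_X c`. For `α = 1` it is the conditional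
divergence `D(W ‖ Q_Y | P_X)`, by the chain rule and Gibbs' inequality. Either way it is a concave
function of `P_X` (the logarithm of a linear function, resp. a linear function), so
`J_α(P_X W)`, its infimum over `Q_Y`, is concave too.
-/

lemma mix_eq_zero_iff {l : ℝ} (hl0 : 0 < l) (hl1 : l < 1) {a b : ℝ≥0∞} :
    ENNReal.ofReal l * a + ENNReal.ofReal (1 - l) * b = 0 ↔ a = 0 ∧ b = 0 := by
  simp [hl0.not_ge, hl1]

lemma ENNReal.rpow_mul_rpow_one_sub_mul_inv {α : ℝ} (hα : 0 < α) {t : ℝ≥0∞} (ht : t ≠ ⊤)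
    {s : ℝ≥0∞} (hs : s ≠ ⊤) : t ^ α * (t * s⁻¹) ^ (1 - α) = t * s ^ (α - 1) := by
  rcases eq_or_ne t 0 with rfl | ht0
  · simp [ENNReal.zero_rpow_of_pos hα]
  rw [ENNReal.mul_rpow_of_ne_zero ht0 (ENNReal.inv_ne_zero.2 hs), ← mul_assoc,
    ← ENNReal.rpow_add _ _ ht0 ht, ENNReal.inv_rpow, ← ENNReal.rpow_neg, neg_sub]
  norm_num

lemma EReal.coe_div_sub_one_mul (α : ℝ) (L : EReal) :
    ((α / (α - 1) : ℝ) : EReal) * L = (((α - 1)⁻¹ : ℝ) : EReal) * ((α : EReal) * L) := by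
  rw [← mul_assoc, ← EReal.coe_mul, div_eq_inv_mul]

lemma Real.mul_log_add_mul_log_le_log_mix {l a b : ℝ} (hl0 : 0 ≤ l) (hl1 : l ≤ 1) (ha : 0 < a)
    (hb : 0 < b) : l * Real.log a + (1 - l) * Real.log b ≤ Real.log (l * a + (1 - l) * b) :=
  strictConcaveOn_log_Ioi.concaveOn.2 ha hb hl0 (by linarith) (by ring)

lemma ENNReal.coe_mul_log_mix_le {k l : ℝ} (hk : 0 < k) (hl0 : 0 < l) (hl1 : l < 1)
    {a b : ℝ≥0∞} (ha : a ≠ 0) (hb : b ≠ 0) :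
    (l : EReal) * ((k : EReal) * ENNReal.log a) +
        ((1 - l : ℝ) : EReal) * ((k : EReal) * ENNReal.log b) ≤
      (k : EReal) * ENNReal.log (ENNReal.ofReal l * a + ENNReal.ofReal (1 - l) * b) := by
  by_cases hab : a = ⊤ ∨ b = ⊤
  · have hmix : ENNReal.ofReal l * a + ENNReal.ofReal (1 - l) * b = ⊤ := by
      rcases hab with rfl | rfl <;> simp [hl0, hl1]
    rw [hmix, ENNReal.log_top, EReal.coe_mul_top_of_pos hk]
    exact le_top
  push Not at hab
  obtain ⟨ha', hb'⟩ := hab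
  have hmix0 : ENNReal.ofReal l * a + ENNReal.ofReal (1 - l) * b ≠ 0 := by
    rw [Ne, mix_eq_zero_iff hl0 hl1]
    exact fun h => ha h.1
  have hmix_top : ENNReal.ofReal l * a + ENNReal.ofReal (1 - l) * b ≠ ⊤ := by
    simp [ha', hb', ENNReal.mul_eq_top]
  have hmix_toReal : (ENNReal.ofReal l * a + ENNReal.ofReal (1 - l) * b).toReal =
      l * a.toReal + (1 - l) * b.toReal := by
    rw [ENNReal.toReal_add (by simp [ha', ENNReal.mul_eq_top])
        (by simp [hb', ENNReal.mul_eq_top]),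
      ENNReal.toReal_mul, ENNReal.toReal_mul, ENNReal.toReal_ofReal hl0.le,
      ENNReal.toReal_ofReal (by linarith)]
  have hlog := Real.mul_log_add_mul_log_le_log_mix hl0.le hl1.le
    (ENNReal.toReal_pos ha ha') (ENNReal.toReal_pos hb hb')
  rw [ENNReal.log_pos_real ha ha', ENNReal.log_pos_real hb hb',
    ENNReal.log_pos_real hmix0 hmix_top, hmix_toReal]
  norm_cast
  nlinarith

lemma Real.sum_mul_log_div_nonneg {ι : Type*} [Fintype ι] {p q : ι → ℝ} (hp : ∀ i, 0 ≤ p i)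
    (hq : ∀ i, 0 ≤ q i) (hpq : ∀ i, q i = 0 → p i = 0) (hp1 : ∑ i, p i = 1)
    (hq1 : ∑ i, q i ≤ 1) : 0 ≤ ∑ i, p i * Real.log (p i / q i) := by
  have hterm : ∀ i, p i - q i ≤ p i * Real.log (p i / q i) := by
    intro i
    rcases (hp i).eq_or_lt with h | h
    · simp [← h, hq i]
    have hqi : 0 < q i := (hq i).lt_of_ne fun h0 => h.ne' (hpq i h0.symm)
    have hlog := Real.log_le_sub_one_of_pos (div_pos hqi h)
    rw [← inv_div, Real.log_inv]
    have : p i * (q i / p i - 1) = q i - p i := by field_simp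
    nlinarith [mul_le_mul_of_nonneg_left hlog h.le]
  calc (0 : ℝ) ≤ ∑ i, p i - ∑ i, q i := by linarith
    _ = ∑ i, (p i - q i) := (sum_sub_distrib _ _).symm
    _ ≤ _ := sum_le_sum fun i _ => hterm i

lemma toReal_mul_log_div_mul {a b c d : ℝ≥0∞} (hc : c ≠ ⊤) (hd : d ≠ ⊤)
    (hac : c * d = 0 → a * b = 0) :
    (a * b).toReal * Real.log ((a * b).toReal / (c * d).toReal) =
      a.toReal * Real.log (a.toReal / c.toReal) * b.toReal +
        a.toReal * (b.toReal * Real.log (b.toReal / d.toReal)) := by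
  simp only [ENNReal.toReal_mul]
  rcases (ENNReal.toReal_nonneg (a := a)).eq_or_lt with ha | ha
  · simp [← ha]
  rcases (ENNReal.toReal_nonneg (a := b)).eq_or_lt with hb | hb
  · simp [← hb]
  have hcd : c * d ≠ 0 := fun h => by
    rcases mul_eq_zero.1 (hac h) with h' | h' <;> simp [h'] at ha hb
  obtain ⟨hc0, hd0⟩ := mul_ne_zero_iff.1 hcd
  have hc' := ENNReal.toReal_pos hc0 hc
  have hd' := ENNReal.toReal_pos hd0 hd
  rw [← div_mul_div_comm, Real.log_mul (by positivity) (by positivity)]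
  ring

section PMF

variable {ι : Type*} [Fintype ι] {f : ι → ℝ≥0∞}

lemma ne_top_of_sum_eq_one (hf : ∑ i, f i = 1) (i : ι) : f i ≠ ⊤ :=
  ne_top_of_le_ne_top ENNReal.one_ne_top (hf ▸ single_le_sum (fun _ _ => zero_le) (mem_univ i))

lemma exists_ne_zero_of_sum_eq_one (hf : ∑ i, f i = 1) : ∃ i, f i ≠ 0 := by
  obtain ⟨i, -, hi⟩ := exists_ne_zero_of_sum_ne_zero (hf ▸ one_ne_zero : ∑ i, f i ≠ 0)
  exact ⟨i, hi⟩

lemma sum_mul_ne_zero_of_sum_eq_one (hf : ∑ i, f i = 1) {g : ι → ℝ≥0∞} (hg : ∀ i, g i ≠ 0) :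
    ∑ i, f i * g i ≠ 0 := by
  obtain ⟨i, hi⟩ := exists_ne_zero_of_sum_eq_one hf
  exact fun h => mul_ne_zero hi (hg i) (sum_eq_zero_iff.1 h i (mem_univ i))

lemma sum_mix_mul {l : ℝ} (P₁ P₂ g : ι → ℝ≥0∞) :
    ∑ i, (ENNReal.ofReal l * P₁ i + ENNReal.ofReal (1 - l) * P₂ i) * g i =
      ENNReal.ofReal l * ∑ i, P₁ i * g i + ENNReal.ofReal (1 - l) * ∑ i, P₂ i * g i := by
  simp only [add_mul, sum_add_distrib, mul_sum, mul_assoc]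

lemma ENNReal.rpow_sum_mul_le_sum_rpow_mul {α : ℝ} (hα : 1 ≤ α)
    {w : ι → ℝ≥0∞} (hw : ∑ i, w i = 1) (P c : ι → ℝ≥0∞) (hc : ∀ i, c i ≠ 0) :
    (∑ i, P i * c i) ^ α ≤ ∑ i, P i ^ α * w i ^ (1 - α) * c i ^ α := by
  have hα0 : 0 < α := by linarith
  by_cases hac : ∀ i, P i ≠ 0 → w i ≠ 0
  · have hw_top := ne_top_of_sum_eq_one hw
    have hmean : ∑ i, P i * c i = ∑ i, w i * ((w i)⁻¹ * (P i * c i)) := by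
      refine sum_congr rfl fun i _ => ?_
      rcases eq_or_ne (P i) 0 with h | h
      · simp [h]
      · rw [← mul_assoc, ENNReal.mul_inv_cancel (hac i h) (hw_top i), one_mul]
    have hterm : ∀ i, w i * ((w i)⁻¹ * (P i * c i)) ^ α = P i ^ α * w i ^ (1 - α) * c i ^ α := by
      intro i
      rcases eq_or_ne (P i) 0 with h | h
      · simp [h, ENNReal.zero_rpow_of_pos hα0]
      · rw [ENNReal.mul_rpow_of_nonneg _ _ hα0.le, ENNReal.mul_rpow_of_nonneg _ _ hα0.le,
          ENNReal.inv_rpow, ← ENNReal.rpow_neg, sub_eq_add_neg,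
          ENNReal.rpow_add _ _ (hac i h) (hw_top i), ENNReal.rpow_one]
        ring
    calc (∑ i, P i * c i) ^ α = (∑ i, w i * ((w i)⁻¹ * (P i * c i))) ^ α := by rw [← hmean]
      _ ≤ ∑ i, w i * ((w i)⁻¹ * (P i * c i)) ^ α :=
        ENNReal.rpow_arith_mean_le_arith_mean_rpow univ _ _ hw hα
      _ = _ := sum_congr rfl fun i _ => hterm i
  · push Not at hac
    obtain ⟨i, hPi, hwi⟩ := hac
    rcases hα.eq_or_lt with rfl | hα1
    · simp
    refine le_top.trans_eq (ENNReal.sum_eq_top.2 ⟨i, mem_univ i, ?_⟩).symm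
    rw [hwi, ENNReal.zero_rpow_of_neg (by linarith), ENNReal.mul_top, ENNReal.top_mul]
    · simp [ENNReal.rpow_eq_zero_iff, hc i, hα0.not_gt]
    · simp [ENNReal.rpow_eq_zero_iff, hPi, hα0.not_gt]

end PMF

noncomputable def renyiMass {ι : Type*} [Fintype ι] (α : ℝ) (P Q : ι → ℝ≥0∞) : ℝ≥0∞ :=
  ∑ i, P i ^ α * Q i ^ (1 - α)

section Renyi

variable {X Y : Type*} [Fintype X] [Fintype Y] {α : ℝ}

lemma renyiDiv_eq_of_ne_one (hα : α ≠ 1) (P Q : X → ℝ≥0∞) :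
    renyiDiv α P Q = (((α - 1)⁻¹ : ℝ) : EReal) * ENNReal.log (renyiMass α P Q) :=
  if_neg hα

lemma renyiMass_compProd_prod (hα : 0 ≤ α) (P : X → ℝ≥0∞) (W : X → Y → ℝ≥0∞)
    {QX : X → ℝ≥0∞} {QY : Y → ℝ≥0∞} (hQX : ∀ x, QX x ≠ ⊤) (hQY : ∀ y, QY y ≠ ⊤) :
    renyiMass α (fun p : X × Y => P p.1 * W p.1 p.2) (fun p => QX p.1 * QY p.2) =
      ∑ x, P x ^ α * QX x ^ (1 - α) * renyiMass α (W x) QY := by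
  simp only [renyiMass, Fintype.sum_prod_type, mul_sum]
  refine sum_congr rfl fun x _ => sum_congr rfl fun y _ => ?_
  rw [ENNReal.mul_rpow_of_nonneg _ _ hα, ENNReal.mul_rpow_of_ne_top (hQX x) (hQY y)]
  ring

lemma renyiMass_ne_zero (hα : 1 ≤ α) {P Q : Y → ℝ≥0∞} (hP : ∑ y, P y = 1) (hQ : ∀ y, Q y ≠ ⊤) :
    renyiMass α P Q ≠ 0 := by
  obtain ⟨y, hy⟩ := exists_ne_zero_of_sum_eq_one hP
  refine fun h => ?_
  have := sum_eq_zero_iff.1 h y (mem_univ y)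
  simp_all [ENNReal.rpow_eq_zero_iff, ne_top_of_sum_eq_one hP y, not_lt.2 hα]

lemma renyiMass_rpow_inv_ne_zero (hα : 1 ≤ α) {P Q : Y → ℝ≥0∞} (hP : ∑ y, P y = 1)
    (hQ : ∀ y, Q y ≠ ⊤) : renyiMass α P Q ^ α⁻¹ ≠ 0 := by
  have hα0 : 0 < α := by linarith
  simp [ENNReal.rpow_eq_zero_iff, renyiMass_ne_zero hα hP hQ, hα0, hα0.le]

end Renyi

section Sibson

variable {X Y : Type*} [Fintype X] [Fintype Y] {α : ℝ} {W : X → Y → ℝ≥0∞} {QY : Y → ℝ≥0∞}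

/-- The objective of Sibson's formula
`J_α(P_X W) = min_{Q_Y} (α / (α - 1)) log ∑ₓ P_X(x) [∑_y W(y|x)^α Q_Y(y)^(1-α)]^(1/α)`;
for fixed `Q_Y` it is the minimum over `Q_X` of `D_α(P_X W ‖ Q_X Q_Y)`. -/
noncomputable def sibsonObjective (α : ℝ) (W : X → Y → ℝ≥0∞) (QY : Y → ℝ≥0∞)
    (P : X → ℝ≥0∞) : EReal :=
  ((α / (α - 1) : ℝ) : EReal) * ENNReal.log (∑ x, P x * renyiMass α (W x) QY ^ α⁻¹)

lemma sibsonObjective_le_renyiDiv (hα : 1 < α) (hW : ∀ x, ∑ y, W x y = 1)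
    {QX : X → ℝ≥0∞} (hQX : ∑ x, QX x = 1) (hQY : ∑ y, QY y = 1) (P : X → ℝ≥0∞) :
    sibsonObjective α W QY P ≤
      renyiDiv α (fun p : X × Y => P p.1 * W p.1 p.2) (fun p => QX p.1 * QY p.2) := by
  have hJensen := ENNReal.rpow_sum_mul_le_sum_rpow_mul hα.le hQX P _
    fun x => renyiMass_rpow_inv_ne_zero hα.le (hW x) (ne_top_of_sum_eq_one hQY)
  simp only [ENNReal.rpow_inv_rpow (by linarith : α ≠ 0)] at hJensen
  rw [renyiDiv_eq_of_ne_one hα.ne', renyiMass_compProd_prod (by linarith) P W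
      (ne_top_of_sum_eq_one hQX) (ne_top_of_sum_eq_one hQY),
    sibsonObjective, EReal.coe_div_sub_one_mul, ← ENNReal.log_rpow]
  exact mul_le_mul_of_nonneg_left (ENNReal.log_monotone hJensen)
    (EReal.coe_nonneg.2 (inv_nonneg.2 (by linarith)))

lemma Jalpha_le_sibsonObjective (hα : 1 < α) (hW : ∀ x, ∑ y, W x y = 1)
    (hQY : ∑ y, QY y = 1) {P : X → ℝ≥0∞} (hP : ∑ x, P x = 1) :
    Jalpha α (fun p : X × Y => P p.1 * W p.1 p.2) ≤ sibsonObjective α W QY P := by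
  set c : X → ℝ≥0∞ := fun x => renyiMass α (W x) QY ^ α⁻¹
  have hc_pow : ∀ x, c x ^ α = renyiMass α (W x) QY := fun x =>
    ENNReal.rpow_inv_rpow (by linarith) _
  set S := ∑ x, P x * c x
  have hS0 : S ≠ 0 := sum_mul_ne_zero_of_sum_eq_one hP
    fun x => renyiMass_rpow_inv_ne_zero hα.le (hW x) (ne_top_of_sum_eq_one hQY)
  have hobj : sibsonObjective α W QY P = ((α / (α - 1) : ℝ) : EReal) * ENNReal.log S := rfl
  rcases eq_or_ne S ⊤ with hS | hS
  · rw [hobj, hS, ENNReal.log_top,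
      EReal.coe_mul_top_of_pos (div_pos (by linarith) (by linarith))]
    exact le_top
  -- the minimising `Q_X`: equality in `ENNReal.rpow_sum_mul_le_sum_rpow_mul`
  set QX : X → ℝ≥0∞ := fun x => P x * c x * S⁻¹
  have hQX : ∑ x, QX x = 1 := by rw [← sum_mul, ENNReal.mul_inv_cancel hS0 hS]
  have hmass : ∑ x, P x ^ α * QX x ^ (1 - α) * renyiMass α (W x) QY = S ^ α := by
    calc ∑ x, P x ^ α * QX x ^ (1 - α) * renyiMass α (W x) QY
        = ∑ x, P x * c x * S ^ (α - 1) := sum_congr rfl fun x _ => by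
          have hPc : P x * c x ≠ ⊤ := ne_top_of_le_ne_top hS
            (single_le_sum (f := fun x => P x * c x) (fun _ _ => zero_le) (mem_univ x))
          rw [← hc_pow, ← ENNReal.rpow_mul_rpow_one_sub_mul_inv (by linarith) hPc hS,
            ENNReal.mul_rpow_of_nonneg (P x) (c x) (by linarith : 0 ≤ α)]
          ring
      _ = S ^ (1 + (α - 1)) := by rw [← sum_mul, ENNReal.rpow_add _ _ hS0 hS, ENNReal.rpow_one]
      _ = S ^ α := by norm_num
  calc Jalpha α (fun p : X × Y => P p.1 * W p.1 p.2)
      ≤ renyiDiv α (fun p : X × Y => P p.1 * W p.1 p.2) (fun p => QX p.1 * QY p.2) :=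
        iInf_le _ (⟨⟨QX, hQX⟩, ⟨QY, hQY⟩⟩ : PMFon X × PMFon Y)
    _ = sibsonObjective α W QY P := by
        rw [renyiDiv_eq_of_ne_one hα.ne', renyiMass_compProd_prod (by linarith) P W
            (ne_top_of_sum_eq_one hQX) (ne_top_of_sum_eq_one hQY), hmass, ENNReal.log_rpow,
          hobj, EReal.coe_div_sub_one_mul]

lemma sibsonObjective_mix_ge (hα : 1 < α) (hW : ∀ x, ∑ y, W x y = 1) (hQY : ∑ y, QY y = 1)
    {P₁ P₂ : X → ℝ≥0∞} (hP₁ : ∑ x, P₁ x = 1) (hP₂ : ∑ x, P₂ x = 1) {l : ℝ} (hl0 : 0 < l)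
    (hl1 : l < 1) :
    (l : EReal) * sibsonObjective α W QY P₁ +
        ((1 - l : ℝ) : EReal) * sibsonObjective α W QY P₂ ≤
      sibsonObjective α W QY
        (fun x => ENNReal.ofReal l * P₁ x + ENNReal.ofReal (1 - l) * P₂ x) := by
  have hc := fun x => renyiMass_rpow_inv_ne_zero hα.le (hW x) (ne_top_of_sum_eq_one hQY)
  rw [sibsonObjective, sibsonObjective, sibsonObjective, sum_mix_mul]
  exact ENNReal.coe_mul_log_mix_le (div_pos (by linarith) (by linarith)) hl0 hl1
    (sum_mul_ne_zero_of_sum_eq_one hP₁ hc) (sum_mul_ne_zero_of_sum_eq_one hP₂ hc)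

end Sibson

section KL

variable {X Y : Type*} [Fintype X] [Fintype Y] {W : X → Y → ℝ≥0∞} {QY : Y → ℝ≥0∞}

/-- The conditional divergence `D(W ‖ Q_Y | P_X)`, with the junk value `log 0 = 0` where `W x` is
not absolutely continuous w.r.t. `Q_Y`. -/
noncomputable def condKL (W : X → Y → ℝ≥0∞) (QY : Y → ℝ≥0∞) (P : X → ℝ≥0∞) : ℝ :=
  ∑ x, (P x).toReal * ∑ y, (W x y).toReal * Real.log ((W x y).toReal / (QY y).toReal)

lemma renyiDiv_one (P Q : X → ℝ≥0∞) : renyiDiv 1 P Q = klDiv P Q := if_pos rfl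

-- the chain rule `D(P_X W ‖ Q_X Q_Y) = D(P_X ‖ Q_X) + D(W ‖ Q_Y | P_X)`
lemma klDiv_compProd_prod (hW : ∀ x, ∑ y, W x y = 1) (P : X → ℝ≥0∞) {QX : X → ℝ≥0∞}
    (hQX : ∀ x, QX x ≠ ⊤) (hQY : ∀ y, QY y ≠ ⊤)
    (hac : ∀ p : X × Y, QX p.1 * QY p.2 = 0 → P p.1 * W p.1 p.2 = 0) :
    klDiv (fun p : X × Y => P p.1 * W p.1 p.2) (fun p => QX p.1 * QY p.2) =
      ((∑ x, (P x).toReal * Real.log ((P x).toReal / (QX x).toReal) + condKL W QY P : ℝ) :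
        EReal) := by
  rw [klDiv, if_pos hac, Fintype.sum_prod_type, condKL, ← sum_add_distrib]
  congr 1
  refine sum_congr rfl fun x _ => ?_
  have hW1 : ∑ y, (W x y).toReal = 1 := by
    rw [← ENNReal.toReal_sum fun y _ => ne_top_of_sum_eq_one (hW x) y, hW x, ENNReal.toReal_one]
  simp only [toReal_mul_log_div_mul (hQX x) (hQY _) fun h => hac (x, _) h, sum_add_distrib,
    ← mul_sum, hW1, mul_one]

lemma Jalpha_one_le_condKL (hW : ∀ x, ∑ y, W x y = 1) (hQY : ∑ y, QY y = 1) {P : X → ℝ≥0∞}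
    (hP : ∑ x, P x = 1) (hac : ∀ x y, P x ≠ 0 → QY y = 0 → W x y = 0) :
    Jalpha 1 (fun p : X × Y => P p.1 * W p.1 p.2) ≤ condKL W QY P := by
  have hacP : ∀ p : X × Y, P p.1 * QY p.2 = 0 → P p.1 * W p.1 p.2 = 0 := by
    rintro ⟨x, y⟩ h
    rcases eq_or_ne (P x) 0 with hx | hx
    · simp [hx]
    · simp [hac x y hx ((mul_eq_zero.1 h).resolve_left hx)]
  have hself : ∑ x, (P x).toReal * Real.log ((P x).toReal / (P x).toReal) = 0 :=
    sum_eq_zero fun x _ => by rcases eq_or_ne (P x).toReal 0 with h | h <;> simp [h]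
  calc Jalpha 1 (fun p : X × Y => P p.1 * W p.1 p.2)
      ≤ renyiDiv 1 (fun p : X × Y => P p.1 * W p.1 p.2) (fun p => P p.1 * QY p.2) :=
        iInf_le _ (⟨⟨P, hP⟩, ⟨QY, hQY⟩⟩ : PMFon X × PMFon Y)
    _ = condKL W QY P := by
        rw [renyiDiv_one, klDiv_compProd_prod hW P (ne_top_of_sum_eq_one hP)
          (ne_top_of_sum_eq_one hQY) hacP, hself, zero_add]

lemma condKL_le_klDiv (hW : ∀ x, ∑ y, W x y = 1) {P QX : X → ℝ≥0∞} (hP : ∑ x, P x = 1)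
    (hQX : ∑ x, QX x = 1) (hQY : ∑ y, QY y = 1) :
    (condKL W QY P : EReal) ≤
      klDiv (fun p : X × Y => P p.1 * W p.1 p.2) (fun p => QX p.1 * QY p.2) := by
  by_cases hac : ∀ p : X × Y, QX p.1 * QY p.2 = 0 → P p.1 * W p.1 p.2 = 0
  swap
  · rw [klDiv, if_neg hac]
    exact le_top
  rw [klDiv_compProd_prod hW P (ne_top_of_sum_eq_one hQX) (ne_top_of_sum_eq_one hQY) hac,
    EReal.coe_le_coe_iff, le_add_iff_nonneg_left]
  have hQX0 : ∀ x, QX x = 0 → P x = 0 := fun x h => by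
    obtain ⟨y, hy⟩ := exists_ne_zero_of_sum_eq_one (hW x)
    simpa [hy] using hac (x, y) (by simp [h])
  refine Real.sum_mul_log_div_nonneg (fun _ => ENNReal.toReal_nonneg)
    (fun _ => ENNReal.toReal_nonneg) (fun x h => ?_) ?_ ?_
  · rw [hQX0 x ((ENNReal.toReal_eq_zero_iff _).1 h |>.resolve_right
      (ne_top_of_sum_eq_one hQX x)), ENNReal.toReal_zero]
  · rw [← ENNReal.toReal_sum fun x _ => ne_top_of_sum_eq_one hP x, hP, ENNReal.toReal_one]
  · rw [← ENNReal.toReal_sum fun x _ => ne_top_of_sum_eq_one hQX x, hQX, ENNReal.toReal_one]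

lemma condKL_mix {P₁ P₂ : X → ℝ≥0∞} (hP₁ : ∀ x, P₁ x ≠ ⊤) (hP₂ : ∀ x, P₂ x ≠ ⊤) {l : ℝ}
    (hl0 : 0 ≤ l) (hl1 : l ≤ 1) :
    condKL W QY (fun x => ENNReal.ofReal l * P₁ x + ENNReal.ofReal (1 - l) * P₂ x) =
      l * condKL W QY P₁ + (1 - l) * condKL W QY P₂ := by
  have hmix : ∀ x, (ENNReal.ofReal l * P₁ x + ENNReal.ofReal (1 - l) * P₂ x).toReal =
      l * (P₁ x).toReal + (1 - l) * (P₂ x).toReal := fun x => by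
    rw [ENNReal.toReal_add (by simp [hP₁ x, ENNReal.mul_eq_top])
        (by simp [hP₂ x, ENNReal.mul_eq_top]),
      ENNReal.toReal_mul, ENNReal.toReal_mul, ENNReal.toReal_ofReal hl0,
      ENNReal.toReal_ofReal (by linarith)]
  simp only [condKL, hmix, add_mul, sum_add_distrib, mul_assoc, ← mul_sum]

end KL

section Concavity

variable {X Y : Type*} [Fintype X] [Fintype Y] {W : X → Y → ℝ≥0∞} {QX : X → ℝ≥0∞}
  {QY : Y → ℝ≥0∞} {P₁ P₂ : X → ℝ≥0∞} {l : ℝ}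

lemma Jalpha_one_mix_le_klDiv (hW : ∀ x, ∑ y, W x y = 1) (hP₁ : ∑ x, P₁ x = 1)
    (hP₂ : ∑ x, P₂ x = 1) (hQX : ∑ x, QX x = 1) (hQY : ∑ y, QY y = 1) (hl0 : 0 < l)
    (hl1 : l < 1) :
    (l : EReal) * Jalpha 1 (fun p : X × Y => P₁ p.1 * W p.1 p.2) +
        ((1 - l : ℝ) : EReal) * Jalpha 1 (fun p : X × Y => P₂ p.1 * W p.1 p.2) ≤
      klDiv (fun p : X × Y => (ENNReal.ofReal l * P₁ p.1 + ENNReal.ofReal (1 - l) * P₂ p.1) *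
        W p.1 p.2) (fun p => QX p.1 * QY p.2) := by
  set Pm : X → ℝ≥0∞ := fun x => ENNReal.ofReal l * P₁ x + ENNReal.ofReal (1 - l) * P₂ x
  by_cases hac : ∀ x y, Pm x ≠ 0 → QY y = 0 → W x y = 0
  swap
  · push Not at hac
    obtain ⟨x, y, hx, hy, hxy⟩ := hac
    rw [klDiv, if_neg fun h => mul_ne_zero hx hxy (h (x, y) (by simp [hy]))]
    exact le_top
  have hPm : ∑ x, Pm x = 1 := by
    simpa [hP₁, hP₂, ← ENNReal.ofReal_add hl0.le (by linarith : 0 ≤ 1 - l)] using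
      sum_mix_mul (l := l) P₁ P₂ 1
  have hac_of_support (P : X → ℝ≥0∞) (hP : ∀ x, Pm x = 0 → P x = 0) :
      ∀ x y, P x ≠ 0 → QY y = 0 → W x y = 0 := fun x y hx =>
    hac x y (mt (hP x) hx)
  calc (l : EReal) * Jalpha 1 (fun p : X × Y => P₁ p.1 * W p.1 p.2) +
        ((1 - l : ℝ) : EReal) * Jalpha 1 (fun p : X × Y => P₂ p.1 * W p.1 p.2)
      ≤ (l : EReal) * (condKL W QY P₁ : EReal) +
          ((1 - l : ℝ) : EReal) * (condKL W QY P₂ : EReal) :=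
        add_le_add
          (mul_le_mul_of_nonneg_left (Jalpha_one_le_condKL hW hQY hP₁ (hac_of_support P₁
            fun x h => ((mix_eq_zero_iff hl0 hl1).1 h).1)) (EReal.coe_nonneg.2 hl0.le))
          (mul_le_mul_of_nonneg_left (Jalpha_one_le_condKL hW hQY hP₂ (hac_of_support P₂
            fun x h => ((mix_eq_zero_iff hl0 hl1).1 h).2)) (EReal.coe_nonneg.2 (by linarith)))
    _ = (condKL W QY Pm : EReal) := by
        rw [condKL_mix (ne_top_of_sum_eq_one hP₁) (ne_top_of_sum_eq_one hP₂) hl0.le hl1.le]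
        norm_cast
    _ ≤ _ := condKL_le_klDiv hW hPm hQX hQY

lemma Jalpha_mix_le_renyiDiv_of_one_lt {α : ℝ} (hα : 1 < α) (hW : ∀ x, ∑ y, W x y = 1)
    (hP₁ : ∑ x, P₁ x = 1) (hP₂ : ∑ x, P₂ x = 1) (hQX : ∑ x, QX x = 1) (hQY : ∑ y, QY y = 1)
    (hl0 : 0 < l) (hl1 : l < 1) :
    (l : EReal) * Jalpha α (fun p : X × Y => P₁ p.1 * W p.1 p.2) +
        ((1 - l : ℝ) : EReal) * Jalpha α (fun p : X × Y => P₂ p.1 * W p.1 p.2) ≤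
      renyiDiv α (fun p : X × Y => (ENNReal.ofReal l * P₁ p.1 + ENNReal.ofReal (1 - l) * P₂ p.1) *
        W p.1 p.2) (fun p => QX p.1 * QY p.2) :=
  calc (l : EReal) * Jalpha α (fun p : X × Y => P₁ p.1 * W p.1 p.2) +
        ((1 - l : ℝ) : EReal) * Jalpha α (fun p : X × Y => P₂ p.1 * W p.1 p.2)
      ≤ (l : EReal) * sibsonObjective α W QY P₁ +
          ((1 - l : ℝ) : EReal) * sibsonObjective α W QY P₂ :=
        add_le_add
          (mul_le_mul_of_nonneg_left (Jalpha_le_sibsonObjective hα hW hQY hP₁)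
            (EReal.coe_nonneg.2 hl0.le))
          (mul_le_mul_of_nonneg_left (Jalpha_le_sibsonObjective hα hW hQY hP₂)
            (EReal.coe_nonneg.2 (by linarith)))
    _ ≤ _ := sibsonObjective_mix_ge hα hW hQY hP₁ hP₂ hl0 hl1
    _ ≤ _ := sibsonObjective_le_renyiDiv hα hW hQX hQY _

end Concavity

/-- for `α ≥ 1` and a fixed channel `P_{Y|X} = W`, `J_α` is concave in the
input distribution `P_X`. -/
theorem stmt13 {X Y : Type*} [Fintype X] [Fintype Y]
    (W : X → Y → ℝ≥0∞) (hW : ∀ x, ∑ y, W x y = 1)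
    (PX1 PX2 : X → ℝ≥0∞) (hPX1 : ∑ x, PX1 x = 1) (hPX2 : ∑ x, PX2 x = 1)
    (α : ℝ) (hα : 1 ≤ α) (l : ℝ) (hl0 : 0 < l) (hl1 : l < 1) :
    ((l : ℝ) : EReal) * Jalpha α (fun p : X × Y => PX1 p.1 * W p.1 p.2) +
        ((1 - l : ℝ) : EReal) * Jalpha α (fun p : X × Y => PX2 p.1 * W p.1 p.2) ≤
      Jalpha α (fun p : X × Y =>
        (ENNReal.ofReal l * PX1 p.1 + ENNReal.ofReal (1 - l) * PX2 p.1) * W p.1 p.2) := by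
  refine le_iInf fun ⟨⟨QX, hQX⟩, ⟨QY, hQY⟩⟩ => ?_
  rcases hα.eq_or_lt with rfl | hα
  · rw [renyiDiv_one]
    exact Jalpha_one_mix_le_klDiv hW hPX1 hPX2 hQX hQY hl0 hl1
  · exact Jalpha_mix_le_renyiDiv_of_one_lt hα hW hPX1 hPX2 hQX hQY hl0 hl1
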